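/- Let k be a commutative ring, λ ∈ k, X a set, and A = MonoidAlgebra k (FreeMonoid X). Let Δ_λ : A → A ⊗[k] A be the k-linear map defined on the basis of words by Δ_λ(1) = −λ(1⊗1) and, for m ≥ 1, Δ_λ(x₁⋯x_m) = Σ_{i=1}^{m} (x₁⋯x_i) ⊗ (x_i⋯x_m) + λ Σ_{i=1}^{m−1} (x₁⋯x_i) ⊗ (x_{i+1}⋯x_m). Then Δ_λ is coassociative: (id ⊗ Δ_λ) ∘ Δ_λ = (Δ_λ ⊗ id) ∘ Δ_λ as maps A → A ⊗[k] A ⊗[k] A. -/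

import Mathlib

/-!
For a letter `x`, deconcatenating `x w` gives `Δ(x w) = (x ⊗ 1) Δ(w) + x ⊗ (x + λ) w`; the
normalisation `Δ(1) = -λ (1 ⊗ 1)` is exactly what makes this hold for `w = 1` as well, and in
particular `Δ(x) = x ⊗ x`. Feeding the rule into both iterated coproducts `T` gives the same
recursion `T(x u) = (x ⊗ 1 ⊗ 1) T(u) + x ⊗ ((x + λ) ⊗ 1) Δ(u) + x ⊗ x ⊗ (x + λ) u`, and both
equal `λ² (1 ⊗ 1 ⊗ 1)` at `1`, so they agree on every word by induction on its length.
-/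

open TensorProduct

/-- The basis element of the monoid algebra of the free monoid corresponding to
the word `x₁ ⋯ x_m` given by the list `l = [x₁, …, x_m]`. -/
noncomputable def word (k : Type*) [CommRing k] {X : Type*} (l : List X) :
    MonoidAlgebra k (FreeMonoid X) :=
  MonoidAlgebra.of k (FreeMonoid X) (FreeMonoid.ofList l)

open LinearMap

lemma assoc_rTensor_tmul {R M N P Q : Type*} [CommSemiring R] [AddCommMonoid M] [Module R M]
    [AddCommMonoid N] [Module R N] [AddCommMonoid P] [Module R P] [AddCommMonoid Q] [Module R Q]
    (f : M →ₗ[R] Q) (s : M ⊗[R] N) (p : P) :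
    TensorProduct.assoc R Q N P (f.rTensor N s ⊗ₜ p)
      = f.rTensor _ (TensorProduct.assoc R M N P (s ⊗ₜ p)) := by
  have h := map_map_assoc f LinearMap.id LinearMap.id (s ⊗ₜ p)
  rw [map_id] at h
  exact h.symm

lemma rTensor_mulLeft_add_algebraMap {k A : Type*} [CommSemiring k] [Semiring A] [Algebra k A]
    (M : Type*) [AddCommMonoid M] [Module k M] (x : A) (c : k) (t : A ⊗[k] M) :
    (mulLeft k (x + algebraMap k A c)).rTensor M t = (mulLeft k x).rTensor M t + c • t := by
  have h : mulLeft k (x + algebraMap k A c) = mulLeft k x + c • LinearMap.id :=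
    LinearMap.ext fun u => by simp [add_mul, Algebra.smul_def]
  rw [h, rTensor_add, rTensor_smul, rTensor_id, LinearMap.add_apply, LinearMap.smul_apply, id_apply]

section Coassociativity

variable {k A : Type*} [CommRing k] [Ring A] [Algebra k A]

def coassocLeft (Δ : A →ₗ[k] A ⊗[k] A) : A →ₗ[k] A ⊗[k] (A ⊗[k] A) :=
  (TensorProduct.assoc k A A A).toLinearMap ∘ₗ Δ.rTensor A ∘ₗ Δ

def coassocRight (Δ : A →ₗ[k] A ⊗[k] A) : A →ₗ[k] A ⊗[k] (A ⊗[k] A) :=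
  Δ.lTensor A ∘ₗ Δ

variable {Δ : A →ₗ[k] A ⊗[k] A} {c : k}

lemma coassocLeft_one_eq_coassocRight_one (hone : Δ 1 = -(c • (1 : A) ⊗ₜ[k] (1 : A))) :
    coassocLeft Δ 1 = coassocRight Δ 1 := by
  simp only [coassocLeft, coassocRight, comp_apply, LinearEquiv.coe_coe, hone, map_neg, map_smul,
    rTensor_tmul, lTensor_tmul, assoc_tmul, neg_tmul, tmul_neg, smul_tmul, tmul_smul]

variable {x : A}
  (hmul : ∀ u, Δ (x * u) = (mulLeft k x).rTensor A (Δ u) + x ⊗ₜ ((x + algebraMap k A c) * u))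
include hmul

lemma apply_eq_tmul_self (hone : Δ 1 = -(c • (1 : A) ⊗ₜ[k] (1 : A))) : Δ x = x ⊗ₜ x := by
  simpa [hone, smul_tmul', tmul_add, Algebra.algebraMap_eq_smul_one] using hmul 1

lemma apply_add_algebraMap_mul (u : A) :
    Δ ((x + algebraMap k A c) * u)
      = (mulLeft k (x + algebraMap k A c)).rTensor A (Δ u)
        + x ⊗ₜ ((x + algebraMap k A c) * u) := by
  rw [rTensor_mulLeft_add_algebraMap, add_mul, ← Algebra.smul_def, map_add, hmul, map_smul,
    add_mul, ← Algebra.smul_def]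
  abel

lemma assoc_rTensor_rTensor_mulLeft (t : A ⊗[k] A) :
    TensorProduct.assoc k A A A (Δ.rTensor A ((mulLeft k x).rTensor A t))
      = (mulLeft k x).rTensor _ (TensorProduct.assoc k A A A (Δ.rTensor A t))
        + x ⊗ₜ (mulLeft k (x + algebraMap k A c)).rTensor A t := by
  induction t using TensorProduct.induction_on with
  | zero => simp
  | tmul a b => simp [hmul, add_tmul, assoc_rTensor_tmul]
  | add s t hs ht => simp only [map_add, hs, ht, tmul_add]; abel

lemma coassocLeft_mul_left (hone : Δ 1 = -(c • (1 : A) ⊗ₜ[k] (1 : A))) (u : A) :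
    coassocLeft Δ (x * u)
      = (mulLeft k x).rTensor _ (coassocLeft Δ u)
        + x ⊗ₜ (mulLeft k (x + algebraMap k A c)).rTensor A (Δ u)
        + x ⊗ₜ (x ⊗ₜ ((x + algebraMap k A c) * u)) := by
  simp only [coassocLeft, comp_apply, LinearEquiv.coe_coe, hmul, map_add, rTensor_tmul,
    apply_eq_tmul_self hmul hone, assoc_rTensor_rTensor_mulLeft hmul, assoc_tmul]

lemma coassocRight_mul_left (u : A) :
    coassocRight Δ (x * u)
      = (mulLeft k x).rTensor _ (coassocRight Δ u)
        + x ⊗ₜ (mulLeft k (x + algebraMap k A c)).rTensor A (Δ u)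
        + x ⊗ₜ (x ⊗ₜ ((x + algebraMap k A c) * u)) := by
  have hcomm := LinearMap.congr_fun
    ((lTensor_comp_rTensor _ (mulLeft k x) Δ).trans (rTensor_comp_lTensor _ _ _).symm) (Δ u)
  rw [comp_apply, comp_apply] at hcomm
  simp only [coassocRight, comp_apply, hmul, map_add, lTensor_tmul,
    apply_add_algebraMap_mul hmul, tmul_add, hcomm, add_assoc]

lemma coassocLeft_mul_eq_coassocRight_mul (hone : Δ 1 = -(c • (1 : A) ⊗ₜ[k] (1 : A))) {u : A}
    (hu : coassocLeft Δ u = coassocRight Δ u) :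
    coassocLeft Δ (x * u) = coassocRight Δ (x * u) := by
  rw [coassocLeft_mul_left hmul hone, coassocRight_mul_left hmul, hu]

end Coassociativity

section Words

variable {k X : Type*} [CommRing k]

lemma word_nil : word k ([] : List X) = 1 := map_one _

lemma word_cons (a : X) (l : List X) :
    word k (a :: l) = MonoidAlgebra.of k _ (FreeMonoid.of a) * word k l := by
  rw [word, word, FreeMonoid.ofList_cons, map_mul]

variable {lam : k} {Δ : MonoidAlgebra k (FreeMonoid X) →ₗ[k]
      MonoidAlgebra k (FreeMonoid X) ⊗[k] MonoidAlgebra k (FreeMonoid X)}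
    (hone : Δ 1 = -(lam • ((1 : MonoidAlgebra k (FreeMonoid X))
      ⊗ₜ[k] (1 : MonoidAlgebra k (FreeMonoid X)))))
    (hword : ∀ l : List X, l ≠ [] →
      Δ (word k l)
        = (∑ i ∈ Finset.range l.length,
            word k (l.take (i + 1)) ⊗ₜ[k] word k (l.drop i))
          + lam • ∑ i ∈ Finset.range (l.length - 1),
            word k (l.take (i + 1)) ⊗ₜ[k] word k (l.drop (i + 1)))
include hone hword

lemma apply_word_cons (a : X) (l : List X) :
    Δ (word k (a :: l))
      = (mulLeft k (MonoidAlgebra.of k _ (FreeMonoid.of a))).rTensor _ (Δ (word k l))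
        + MonoidAlgebra.of k _ (FreeMonoid.of a) ⊗ₜ
          ((MonoidAlgebra.of k _ (FreeMonoid.of a) + algebraMap k _ lam) * word k l) := by
  cases l with
  | nil =>
    rw [hword [a] (List.cons_ne_nil _ _), word_nil, hone]
    simp only [List.length_cons, List.length_nil, zero_add, Finset.sum_range_one, Nat.sub_self,
      Finset.range_zero, Finset.sum_empty, smul_zero, add_zero, List.take_succ_cons,
      List.take_zero, List.drop_zero, word_cons, word_nil, mul_one, Algebra.algebraMap_eq_smul_one,
      tmul_add, map_neg, map_smul, rTensor_tmul, mulLeft_apply, tmul_smul]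
    abel
  | cons b l =>
    rw [hword _ (List.cons_ne_nil _ _), hword _ (List.cons_ne_nil _ _)]
    simp only [List.length_cons, Nat.add_sub_cancel, Finset.sum_range_succ', List.take_succ_cons,
      List.drop_succ_cons, List.take_zero, List.drop_zero, word_cons, word_nil, mul_one, add_mul,
      ← Algebra.smul_def, tmul_add, map_add, map_smul, map_sum, rTensor_tmul, mulLeft_apply,
      tmul_smul, Finset.smul_sum, smul_add]
    abel

lemma apply_of_mul (a : X) (u : MonoidAlgebra k (FreeMonoid X)) :
    Δ (MonoidAlgebra.of k _ (FreeMonoid.of a) * u)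
      = (mulLeft k (MonoidAlgebra.of k _ (FreeMonoid.of a))).rTensor _ (Δ u)
        + MonoidAlgebra.of k _ (FreeMonoid.of a) ⊗ₜ
          ((MonoidAlgebra.of k _ (FreeMonoid.of a) + algebraMap k _ lam) * u) := by
  induction u using MonoidAlgebra.induction_on with
  | of w =>
    rw [← FreeMonoid.ofList_toList w, ← word, ← word_cons]
    exact apply_word_cons hone hword a _
  | add u v hu hv =>
    rw [mul_add, map_add, hu, hv, mul_add, map_add, map_add, tmul_add]
    abel
  | smul r u hu =>
    rw [mul_smul_comm, map_smul, hu, mul_smul_comm, map_smul, map_smul, tmul_smul, smul_add]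

end Words

/-- The linear map `Δ_λ` on the monoid algebra of the free monoid on `X`,
defined on the word basis by `Δ_λ(1) = -λ (1 ⊗ 1)` and
`Δ_λ(x₁⋯x_m) = Σ_{i=1}^m (x₁⋯x_i) ⊗ (x_i⋯x_m) + λ Σ_{i=1}^{m−1} (x₁⋯x_i) ⊗ (x_{i+1}⋯x_m)`,
is coassociative. -/
theorem coassoc_of_word_coproduct
    {k : Type*} [CommRing k] {X : Type*} (lam : k)
    (Δ : MonoidAlgebra k (FreeMonoid X) →ₗ[k]
      MonoidAlgebra k (FreeMonoid X) ⊗[k] MonoidAlgebra k (FreeMonoid X))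
    (hone : Δ 1 = -(lam • ((1 : MonoidAlgebra k (FreeMonoid X))
      ⊗ₜ[k] (1 : MonoidAlgebra k (FreeMonoid X)))))
    (hword : ∀ l : List X, l ≠ [] →
      Δ (word k l)
        = (∑ i ∈ Finset.range l.length,
            word k (l.take (i + 1)) ⊗ₜ[k] word k (l.drop i))
          + lam • ∑ i ∈ Finset.range (l.length - 1),
            word k (l.take (i + 1)) ⊗ₜ[k] word k (l.drop (i + 1))) :
    ∀ a : MonoidAlgebra k (FreeMonoid X),
      (TensorProduct.assoc k _ _ _) (LinearMap.rTensor _ Δ (Δ a))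
        = LinearMap.lTensor _ Δ (Δ a) := by
  have coassoc_of : ∀ w,
      MonoidAlgebra.of k _ w ∈ LinearMap.eqLocus (coassocLeft Δ) (coassocRight Δ) := by
    intro w
    induction w using FreeMonoid.inductionOn' with
    | one => rw [map_one]; exact coassocLeft_one_eq_coassocRight_one hone
    | of_mul a w ih =>
      rw [map_mul]
      exact coassocLeft_mul_eq_coassocRight_mul (apply_of_mul hone hword a) hone ih
  intro a
  change a ∈ LinearMap.eqLocus (coassocLeft Δ) (coassocRight Δ)
  induction a using MonoidAlgebra.induction_on with
  | of w => exact coassoc_of w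
  | add u v hu hv => exact add_mem hu hv
  | smul r u hu => exact Submodule.smul_mem _ r hu
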